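/- Under the same setting as the previous lower bound with d ≥ κ + 1 (so L/(μ(d-1)) ≤ 1), the iterates satisfy f(w_T) - f(w_*) ≥ (f(w_0) - f(w_*))/2 · exp(-8T/κ), where w_* = 0 is the minimizer. -/

import Mathlib

/-!
The Hessian is diagonal, so gradient descent acts on each coordinate by the scalar factors
`1 - η_t λ_i`. On the `d - 1` coordinates with curvature `μ = L/κ` each factor is at least
`1 - 2/κ ≥ exp (-4/κ)` because `η_t ≤ 2/L`; these coordinates carry at least half of the initial
excess risk since `L ≤ (d - 1) μ`, and after `T` steps they retain a fraction `exp (-8T/κ)` of it.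
-/

open Matrix Finset

theorem Real.exp_neg_two_mul_le_one_sub {x : ℝ} (hx₀ : 0 ≤ x) (hx : x ≤ 1 / 2) :
    Real.exp (-(2 * x)) ≤ 1 - x := by
  have hinv : Real.exp (-(2 * x)) * Real.exp (2 * x) = 1 := by
    rw [← Real.exp_add, neg_add_cancel, Real.exp_zero]
  nlinarith [Real.add_one_le_exp (2 * x), Real.exp_pos (-(2 * x))]

theorem Real.exp_neg_two_mul_le_prod_one_sub {a : ℕ → ℝ} {x : ℝ} (hx₀ : 0 ≤ x) (hx : x ≤ 1 / 2)
    (ha : ∀ s, a s ≤ x) (t : ℕ) :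
    Real.exp (-(2 * x * t)) ≤ ∏ s ∈ range t, (1 - a s) := by
  induction t with
  | zero => simp
  | succ t ih =>
    rw [prod_range_succ, Nat.cast_succ, mul_add, mul_one, neg_add, Real.exp_add]
    gcongr
    · exact (Real.exp_pos _).le.trans ih
    · exact (Real.exp_neg_two_mul_le_one_sub hx₀ hx).trans (by linarith [ha t])

theorem Real.exp_neg_le_sq_prod_one_sub_mul_div {L κ : ℝ} (hL : 0 < L) (hκ : 4 ≤ κ)
    {η : ℕ → ℝ} (hη : ∀ s, η s ≤ 2 / L) (T : ℕ) :
    Real.exp (-8 * T / κ) ≤ (∏ s ∈ range T, (1 - η s * (L / κ))) ^ 2 := by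
  have hκ₀ : 0 < κ := by linarith
  have hprod : Real.exp (-(2 * (2 / κ) * T)) ≤ ∏ s ∈ range T, (1 - η s * (L / κ)) := by
    refine Real.exp_neg_two_mul_le_prod_one_sub (by positivity) ?_ (fun s => ?_) T
    · rw [div_le_iff₀ hκ₀]; linarith
    · calc η s * (L / κ) ≤ 2 / L * (L / κ) := by gcongr; exact hη s
        _ = 2 / κ := by field_simp
  calc Real.exp (-8 * T / κ) = Real.exp (-(2 * (2 / κ) * T)) ^ 2 := by
        rw [← Real.exp_nat_mul]; ring_nf
    _ ≤ _ := by gcongr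

variable {ι R : Type*} [Fintype ι] [DecidableEq ι]

theorem Matrix.dotProduct_diagonal_mulVec_self [CommSemiring R] (D x : ι → R) :
    x ⬝ᵥ diagonal D *ᵥ x = ∑ i, D i * x i ^ 2 := by
  simp only [dotProduct, mulVec_diagonal]
  exact sum_congr rfl fun i _ => by ring

theorem Matrix.iterate_one_sub_smul_diagonal_mulVec_apply [CommRing R] (D : ι → R) (η : ℕ → R)
    (w : ℕ → ι → R) (hrec : ∀ t, w (t + 1) = (1 - η t • diagonal D) *ᵥ w t) (t : ℕ) (i : ι) :
    w t i = (∏ s ∈ range t, (1 - η s * D i)) * w 0 i := by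
  induction t with
  | zero => simp
  | succ t ih =>
    rw [hrec, sub_mulVec, one_mulVec, smul_mulVec, Pi.sub_apply, Pi.smul_apply,
      mulVec_diagonal, ih, prod_range_succ, smul_eq_mul]
    ring

theorem sum_ite_eq_mul_sq_of_forall_ne [CommRing R] (i₀ : ι) (a b q : R) (x : ι → R)
    (hx : ∀ i ≠ i₀, x i = q) :
    ∑ i, (if i = i₀ then a else b) * x i ^ 2
      = a * x i₀ ^ 2 + ((Fintype.card ι : R) - 1) * b * q ^ 2 := by
  rw [← add_sum_erase _ _ (mem_univ i₀), if_pos rfl,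
    sum_congr rfl fun i hi => by rw [if_neg (ne_of_mem_erase hi), hx i (ne_of_mem_erase hi)],
    sum_const, card_erase_of_mem (mem_univ i₀), card_univ,
    nsmul_eq_mul, Nat.cast_sub (Fintype.card_pos_iff.2 ⟨i₀⟩), Nat.cast_one, mul_assoc]

theorem sgd_lower_bound_excess_risk
    (d : ℕ) (hd : 2 ≤ d) (L μ κ c0 : ℝ) (hL : 0 < L) (hκ : 4 ≤ κ)
    (hμ : μ = L / κ)
    (hdκ : (d : ℝ) ≥ κ + 1)
    (H : Matrix (Fin d) (Fin d) ℝ)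
    (hH : H = Matrix.diagonal (fun i => if i = ⟨0, by omega⟩ then L else μ))
    (η : ℕ → ℝ) (hη : ∀ t, 0 ≤ η t ∧ η t ≤ 2 / L)
    (w : ℕ → Fin d → ℝ)
    (hw0 : w 0 = fun _ => c0)
    (hrec : ∀ t, w (t + 1) = ((1 : Matrix (Fin d) (Fin d) ℝ) - η t • H).mulVec (w t))
    (f : (Fin d → ℝ) → ℝ) (hf : f = fun x => (1 / 2) * (x ⬝ᵥ H.mulVec x))
    (wstar : Fin d → ℝ) (hwstar : wstar = 0)
    (T : ℕ) :
    f (w T) - f wstar ≥ (f (w 0) - f wstar) / 2 * Real.exp (-8 * T / κ) := by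
  subst hH
  set i₀ : Fin d := ⟨0, by omega⟩
  set P := ∏ s ∈ range T, (1 - η s * μ)
  have hκ₀ : 0 < κ := by linarith
  have hμ₀ : 0 < μ := hμ ▸ div_pos hL hκ₀
  have hL_le : L ≤ ((d : ℝ) - 1) * μ := by
    rw [hμ, mul_div_assoc', le_div_iff₀ hκ₀]; nlinarith
  have hf_sum : ∀ x, f x = 1 / 2 * ∑ i, (if i = i₀ then L else μ) * x i ^ 2 := fun x => by
    simp only [hf, dotProduct_diagonal_mulVec_self]
  have hf_star : f wstar = 0 := by simp [hf, hwstar]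
  have hf_zero : f (w 0) = 1 / 2 * (L * c0 ^ 2 + ((d : ℝ) - 1) * μ * c0 ^ 2) := by
    rw [hf_sum, sum_ite_eq_mul_sq_of_forall_ne i₀ L μ c0 _ (fun i _ => by rw [hw0]),
      Fintype.card_fin, hw0]
  have hf_T : 1 / 2 * (((d : ℝ) - 1) * μ * (P * c0) ^ 2) ≤ f (w T) := by
    have hw_T : ∀ i ≠ i₀, w T i = P * c0 := fun i hi => by
      rw [iterate_one_sub_smul_diagonal_mulVec_apply _ η w hrec, hw0, if_neg hi]
    rw [hf_sum, sum_ite_eq_mul_sq_of_forall_ne i₀ L μ (P * c0) _ hw_T, Fintype.card_fin]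
    nlinarith [sq_nonneg (w T i₀)]
  have hexp : Real.exp (-8 * T / κ) ≤ P ^ 2 := by
    simpa only [← hμ] using Real.exp_neg_le_sq_prod_one_sub_mul_div hL hκ (fun s => (hη s).2) T
  have hm : 0 ≤ ((d : ℝ) - 1) * μ := mul_nonneg (by linarith) hμ₀.le
  rw [hf_star, sub_zero, sub_zero, hf_zero, ge_iff_le]
  calc 1 / 2 * (L * c0 ^ 2 + ((d : ℝ) - 1) * μ * c0 ^ 2) / 2 * Real.exp (-8 * T / κ)
      ≤ 1 / 2 * (((d : ℝ) - 1) * μ * c0 ^ 2 * Real.exp (-8 * T / κ)) := by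
        linarith [mul_le_mul_of_nonneg_right hL_le
          (by positivity : 0 ≤ c0 ^ 2 * Real.exp (-8 * T / κ))]
    _ ≤ 1 / 2 * (((d : ℝ) - 1) * μ * c0 ^ 2 * P ^ 2) := by gcongr
    _ = 1 / 2 * (((d : ℝ) - 1) * μ * (P * c0) ^ 2) := by ring
    _ ≤ f (w T) := hf_T
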